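/- Let b₀ be an integer, b₁ ≥ 0 an integer, and b₂, …, bₙ positive integers. Then the continued fractions [b₀, 2b₁+1, b₂, b₃, …, bₙ] and [b₀+1, (−2,2)^{b₁}, −b₂−1, −b₃, …, −bₙ] are equal, where (−2,2)^{k} denotes the block −2, 2 repeated k times. -/
import Mathlib


/-- The value of the continued fraction `[a₀, a₁, …, aₙ] = a₀ + 1/(a₁ + 1/(⋯ + 1/aₙ))`,
computed in `ℚ` (note `(0 : ℚ)⁻¹ = 0`, so `cf [a] = a`). -/
def cf : List ℤ → ℚ
  | [] => 0
  | a :: l => a + (cf l)⁻¹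

/-- `blk a b k` is the block `a, b` repeated `k` times. -/
def blk (a b : ℤ) : ℕ → List ℤ
  | 0 => []
  | k + 1 => a :: b :: blk a b k

lemma cf_one_le : ∀ l : List ℤ, (∀ a ∈ l, 0 < a) → l ≠ [] → 1 ≤ cf l
  | [], _, h => absurd rfl h
  | a :: l, hl, _ => by
    have ha : 0 < a := hl a (by simp)
    have ha' : (1 : ℚ) ≤ (a : ℚ) := by exact_mod_cast ha
    rcases eq_or_ne l [] with rfl | hne
    · simpa [cf] using ha'
    · have h1 : 1 ≤ cf l := cf_one_le l (fun x hx => hl x (by simp [hx])) hne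
      have : (0 : ℚ) ≤ (cf l)⁻¹ := inv_nonneg.mpr (by linarith)
      simp only [cf]; linarith

lemma cf_map_neg : ∀ l : List ℤ, cf (l.map (fun a => -a)) = -cf l
  | [] => by simp [cf]
  | a :: l => by
    simp [cf, cf_map_neg l, inv_neg]
    ring

lemma blk_cf (x : ℚ) (hx : 1 ≤ x) : ∀ (k : ℕ) (L : List ℤ), cf L = -x - 1 →
    cf (blk (-2) 2 k ++ L) = -((2*k+1)*x+1)/(2*k*x+1)
  | 0, L, hL => by simp [blk, hL]; ring
  | k + 1, L, hL => by
    have ih := blk_cf x hx k L hL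
    have hx0 : (0:ℚ) < x := by linarith
    have hknn : (0:ℚ) ≤ (k:ℚ) := Nat.cast_nonneg k
    have hd : (0:ℚ) < 2*(k:ℚ)*x+1 := by nlinarith
    have hn : (0:ℚ) < (2*(k:ℚ)+1)*x+1 := by nlinarith
    have hm : (0:ℚ) < (2*(k:ℚ)+2)*x+1 := by nlinarith
    have e0 : (-((2*(k:ℚ)+1)*x+1)/(2*(k:ℚ)*x+1))⁻¹
        = -((2*(k:ℚ)*x+1)/((2*(k:ℚ)+1)*x+1)) := by
      rw [neg_div, inv_neg, inv_div]
    have e1 : (2:ℚ) + (-((2*(k:ℚ)+1)*x+1)/(2*(k:ℚ)*x+1))⁻¹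
        = ((2*(k:ℚ)+2)*x+1)/((2*(k:ℚ)+1)*x+1) := by
      rw [e0]
      field_simp
      ring
    show cf ((-2) :: 2 :: (blk (-2) 2 k ++ L)) = _
    simp only [cf, ih]
    push_cast
    rw [e1, inv_div]
    have hm' : (2*((k:ℚ)+1)*x+1) ≠ 0 := by nlinarith
    field_simp
    ring

theorem substitution_two (b₀ b₁ : ℤ) (hb₁ : 0 ≤ b₁) (b₂ : ℤ) (hb₂ : 0 < b₂)
    (l : List ℤ) (hl : ∀ a ∈ l, 0 < a) :
    cf (b₀ :: (2*b₁ + 1) :: b₂ :: l) =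
      cf ((b₀ + 1) :: blk (-2) 2 b₁.toNat ++ (-b₂ - 1) :: l.map (fun a => -a)) := by
  set x : ℚ := cf (b₂ :: l) with hxdef
  have hx : 1 ≤ x := cf_one_le (b₂ :: l)
    (by intro a ha; rcases List.mem_cons.mp ha with rfl | h; exact hb₂; exact hl a h)
    (by simp)
  have hx0 : (0:ℚ) < x := by linarith
  have hL : cf ((-b₂ - 1) :: l.map (fun a => -a)) = -x - 1 := by
    simp only [cf, cf_map_neg, inv_neg, hxdef]
    push_cast
    ring
  have hcast : ((b₁.toNat : ℕ) : ℚ) = (b₁ : ℚ) := by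
    exact_mod_cast congrArg (Int.cast : ℤ → ℚ) (Int.toNat_of_nonneg hb₁)
  have hblk := blk_cf x hx b₁.toNat _ hL
  rw [hcast] at hblk
  have lhs_eq : cf (b₀ :: (2*b₁ + 1) :: b₂ :: l)
      = (b₀ : ℚ) + (((2*b₁ + 1 : ℤ) : ℚ) + x⁻¹)⁻¹ := rfl
  have rhs_eq : cf ((b₀ + 1) :: blk (-2) 2 b₁.toNat ++ (-b₂ - 1) :: l.map (fun a => -a))
      = ((b₀ + 1 : ℤ) : ℚ)
        + (cf (blk (-2) 2 b₁.toNat ++ (-b₂ - 1) :: l.map (fun a => -a)))⁻¹ := rfl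
  rw [lhs_eq, rhs_eq, hblk]
  have hb1 : (0:ℚ) ≤ (b₁:ℚ) := by exact_mod_cast hb₁
  have hd : (0:ℚ) < 2*(b₁:ℚ)*x+1 := by nlinarith
  have hn : (0:ℚ) < (2*(b₁:ℚ)+1)*x+1 := by nlinarith
  have e0 : (-((2*(b₁:ℚ)+1)*x+1)/(2*(b₁:ℚ)*x+1))⁻¹
      = -((2*(b₁:ℚ)*x+1)/((2*(b₁:ℚ)+1)*x+1)) := by
    rw [neg_div, inv_neg, inv_div]
  have e1 : ((2*b₁ + 1 : ℤ) : ℚ) + x⁻¹ = ((2*(b₁:ℚ)+1)*x+1)/x := by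
    push_cast
    field_simp
  rw [e0, e1, inv_div]
  push_cast
  field_simp
  ring
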